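/- Let S be a finite set of points of ℝ^n all of norm r > 0 and with at least two elements. Define, for β > 0 and y ∈ ℝ^n: the weights π(x|y) := exp(−β‖y−x‖²/2) / Σ_{x'∈S} exp(−β‖y−x'‖²/2); the barycenter b(y) := Σ_{x∈S} π(x|y) x; the centered points x̃(x,y) := x − b(y); the field F(y) := β Σ_{x∈S} π(x|y) ⟨y−x, x̃(x,y)⟩ x̃(x,y); the barycenter x̄_*(y) of S_*(y); and A_*(y) := |S_*(y)|^{−1} Σ_{x∈S_*(y)} ⟨x̄_*(y), x − x̄_*(y)⟩ (x − x̄_*(y)). Then there exists a constant C > 0, depending only on the cardinality of S and on r, such that for every β > 0 and every y ∈ ℝ^n with S_*(y) ≠ S, one has ‖F(y) − β A_*(y)‖ ≤ C β (‖y‖ + r) exp(−β c(y)). -/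

import Mathlib

open scoped Classical BigOperators RealInnerProductSpace

noncomputable section

/-- `dist(y,S) = min_{x∈S} ‖y−x‖` (as the infimum of a finite nonempty set of reals). -/
def distS {n : ℕ} (S : Finset (EuclideanSpace ℝ (Fin n))) (y : EuclideanSpace ℝ (Fin n)) : ℝ :=
  sInf ((fun x => ‖y - x‖) '' ↑S)

/-- `S_*(y)`, the set of closest points of `S` to `y`. -/
def Sstar {n : ℕ} (S : Finset (EuclideanSpace ℝ (Fin n))) (y : EuclideanSpace ℝ (Fin n)) :
    Finset (EuclideanSpace ℝ (Fin n)) :=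
  S.filter fun x => ‖y - x‖ = distS S y

/-- The energy gap `c(y) = min_{x ∈ S∖S_*(y)} ‖y−x‖²/2 − dist(y,S)²/2`. -/
def gap {n : ℕ} (S : Finset (EuclideanSpace ℝ (Fin n))) (y : EuclideanSpace ℝ (Fin n)) : ℝ :=
  sInf ((fun x => ‖y - x‖ ^ 2 / 2) '' (↑S \ ↑(Sstar S y))) - distS S y ^ 2 / 2

/-- The Gibbs (softmax) weight `π(x|y) = exp(−β‖y−x‖²/2) / ∑_{x'∈S} exp(−β‖y−x'‖²/2)`. -/
def gibbsW {n : ℕ} (S : Finset (EuclideanSpace ℝ (Fin n))) (β : ℝ)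
    (x y : EuclideanSpace ℝ (Fin n)) : ℝ :=
  Real.exp (-β * ‖y - x‖ ^ 2 / 2) / ∑ x' ∈ S, Real.exp (-β * ‖y - x'‖ ^ 2 / 2)

/-- The Gibbs barycenter `b(y) = ∑_{x∈S} π(x|y) x`. -/
def gibbsBary {n : ℕ} (S : Finset (EuclideanSpace ℝ (Fin n))) (β : ℝ)
    (y : EuclideanSpace ℝ (Fin n)) : EuclideanSpace ℝ (Fin n) :=
  ∑ x ∈ S, gibbsW S β x y • x

/-- The centered point `x̃(x,y) = x − b(y)`. -/
def xtil {n : ℕ} (S : Finset (EuclideanSpace ℝ (Fin n))) (β : ℝ)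
    (x y : EuclideanSpace ℝ (Fin n)) : EuclideanSpace ℝ (Fin n) :=
  x - gibbsBary S β y

/-- The field `F(y) = β ∑_{x∈S} π(x|y) ⟪y−x, x̃(x,y)⟫ x̃(x,y)`. -/
def forceF {n : ℕ} (S : Finset (EuclideanSpace ℝ (Fin n))) (β : ℝ)
    (y : EuclideanSpace ℝ (Fin n)) : EuclideanSpace ℝ (Fin n) :=
  β • ∑ x ∈ S, (gibbsW S β x y * ⟪y - x, xtil S β x y⟫) • xtil S β x y

/-- The barycenter `x̄_*(y)` of the set of closest points `S_*(y)`. -/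
def baryStar {n : ℕ} (S : Finset (EuclideanSpace ℝ (Fin n)))
    (y : EuclideanSpace ℝ (Fin n)) : EuclideanSpace ℝ (Fin n) :=
  ((Sstar S y).card : ℝ)⁻¹ • ∑ x ∈ Sstar S y, x

/-- `A_*(y) = |S_*(y)|⁻¹ ∑_{x∈S_*(y)} ⟪x̄_*(y), x − x̄_*(y)⟫ (x − x̄_*(y))`. -/
def Astar {n : ℕ} (S : Finset (EuclideanSpace ℝ (Fin n)))
    (y : EuclideanSpace ℝ (Fin n)) : EuclideanSpace ℝ (Fin n) :=
  ((Sstar S y).card : ℝ)⁻¹ •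
    ∑ x ∈ Sstar S y, ⟪baryStar S y, x - baryStar S y⟫ • (x - baryStar S y)

/-! Off the closest points `S_*(y)` the Gibbs weights are at most `exp(−β c(y))` times their
common value on `S_*(y)`, so `π(·|y)` is within `2 |S| exp(−β c(y))` in total variation of the
uniform distribution on `S_*(y)`; hence `b(y)` is that close to `x̄_*(y)` (times `r`). Since all
points of `S_*(y)` have the same norm and the same distance to `y`, `⟪x̄_*, x − x̄_*⟫` and
`⟪y − x, x − x̄_*⟫` differ on `S_*(y)` by a constant, which averages out against `x − x̄_*`. Thus
`β A_*(y)` is the same expression as `F(y)`, with the uniform weights and `x̄_*` in place of `π`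
and `b`, and the estimate is a perturbation bound. -/

section General

variable {α E F : Type*} [SeminormedAddCommGroup E] [NormedSpace ℝ E]
  [NormedAddCommGroup F] [InnerProductSpace ℝ F]

def uniformWeight (K : Finset α) (x : α) : ℝ :=
  if x ∈ K then (K.card : ℝ)⁻¹ else 0

lemma uniformWeight_nonneg (K : Finset α) (x : α) : 0 ≤ uniformWeight K x := by
  unfold uniformWeight; split_ifs <;> positivity

lemma sum_uniformWeight_smul {V : Type*} [AddCommGroup V] [Module ℝ V] {K s : Finset α}
    (hK : K ⊆ s) (f : α → V) :
    ∑ x ∈ s, uniformWeight K x • f x = (K.card : ℝ)⁻¹ • ∑ x ∈ K, f x := by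
  rw [Finset.smul_sum, ← Finset.sum_subset hK fun x _ hx => by simp [uniformWeight, hx]]
  exact Finset.sum_congr rfl fun x hx => by simp [uniformWeight, hx]

lemma sum_abs_uniformWeight {K s : Finset α} (hK : K ⊆ s) (hKne : K.Nonempty) :
    ∑ x ∈ s, |uniformWeight K x| = 1 := by
  have h := sum_uniformWeight_smul hK (fun _ => (1 : ℝ))
  simp only [smul_eq_mul, mul_one, Finset.sum_const, nsmul_eq_mul] at h
  rw [Finset.sum_congr rfl fun x _ => abs_of_nonneg (uniformWeight_nonneg K x), h,
    inv_mul_cancel₀ (by exact_mod_cast hKne.card_pos.ne')]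

lemma sum_abs_div_sum_sub_uniformWeight_le [DecidableEq α] {K s : Finset α} {W : α → ℝ}
    {e₀ ε : ℝ}
    (hK : K ⊆ s) (hKne : K.Nonempty) (he₀ : 0 < e₀) (hε : 0 ≤ ε)
    (hW : ∀ x ∈ s, 0 ≤ W x) (hWK : ∀ x ∈ K, W x = e₀) (hWoff : ∀ x ∈ s \ K, W x ≤ ε * e₀) :
    ∑ x ∈ s, |W x / ∑ x' ∈ s, W x' - uniformWeight K x| ≤ 2 * (s \ K).card * ε := by
  set D := ∑ x' ∈ s, W x'
  set R := ∑ x ∈ s \ K, W x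
  have hk : (1 : ℝ) ≤ K.card := by exact_mod_cast hKne.card_pos
  have hD : D = K.card * e₀ + R := by
    simp only [D, R]
    rw [← Finset.sum_sdiff hK, Finset.sum_congr rfl hWK, Finset.sum_const, nsmul_eq_mul]; ring
  have hR : R ≤ (s \ K).card * (ε * e₀) := by
    simpa using Finset.sum_le_sum hWoff
  have hR0 : 0 ≤ R := Finset.sum_nonneg fun x hx => hW x (Finset.sdiff_subset hx)
  have hD_ge : e₀ ≤ D := by nlinarith
  have hD0 : 0 < D := he₀.trans_le hD_ge
  have hoff : ∑ x ∈ s \ K, |W x / D - uniformWeight K x| = R / D := by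
    rw [Finset.sum_div]
    refine Finset.sum_congr rfl fun x hx => ?_
    have hxK := (Finset.mem_sdiff.mp hx).2
    simp only [uniformWeight, hxK, if_false, sub_zero]
    exact abs_of_nonneg (div_nonneg (hW x (Finset.sdiff_subset hx)) hD0.le)
  have hon : ∑ x ∈ K, |W x / D - uniformWeight K x| = R / D := by
    have hterm : ∀ x ∈ K, |W x / D - uniformWeight K x| = (K.card : ℝ)⁻¹ - e₀ / D := by
      intro x hx
      rw [hWK x hx, abs_sub_comm, abs_of_nonneg]
      · simp [uniformWeight, hx]
      · simp only [uniformWeight, hx, if_true, sub_nonneg]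
        rw [div_le_iff₀ hD0, inv_mul_eq_div, le_div_iff₀ (by positivity)]
        linarith
    rw [Finset.sum_congr rfl hterm, Finset.sum_const, nsmul_eq_mul, hD]
    field_simp
    ring
  rw [← Finset.sum_sdiff hK, hoff, hon, ← two_mul, mul_assoc, mul_le_mul_iff_right₀ two_pos,
    div_le_iff₀ hD0]
  calc R ≤ (s \ K).card * (ε * e₀) := hR
    _ ≤ (s \ K).card * ε * D := by rw [← mul_assoc]; gcongr

lemma norm_sum_smul_le_of_norm_le (s : Finset α) (p : α → ℝ) {v : α → E} {r : ℝ}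
    (hv : ∀ x ∈ s, ‖v x‖ ≤ r) : ‖∑ x ∈ s, p x • v x‖ ≤ (∑ x ∈ s, |p x|) * r := by
  rw [Finset.sum_mul]
  refine (norm_sum_le _ _).trans (Finset.sum_le_sum fun x hx => ?_)
  rw [norm_smul, Real.norm_eq_abs]
  exact mul_le_mul_of_nonneg_left (hv x hx) (abs_nonneg _)

lemma norm_sum_smul_sub_sum_smul_le (s : Finset α) (p q : α → ℝ) (v w : α → E) :
    ‖∑ x ∈ s, p x • v x - ∑ x ∈ s, q x • w x‖ ≤
      ∑ x ∈ s, (|p x - q x| * ‖v x‖ + |q x| * ‖v x - w x‖) := by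
  rw [← Finset.sum_sub_distrib]
  refine (norm_sum_le _ _).trans (Finset.sum_le_sum fun x _ => ?_)
  have h : p x • v x - q x • w x = (p x - q x) • v x + q x • (v x - w x) := by
    rw [sub_smul, smul_sub]; abel
  rw [h, ← Real.norm_eq_abs, ← Real.norm_eq_abs, ← norm_smul, ← norm_smul]
  exact norm_add_le _ _

lemma norm_inner_smul_le (v w : F) : ‖⟪v, w⟫ • w‖ ≤ ‖v‖ * ‖w‖ * ‖w‖ := by
  rw [norm_smul, Real.norm_eq_abs]
  exact mul_le_mul_of_nonneg_right (abs_real_inner_le_norm v w) (norm_nonneg w)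

lemma norm_inner_smul_sub_inner_smul_le (v w w' : F) :
    ‖⟪v, w⟫ • w - ⟪v, w'⟫ • w'‖ ≤ ‖v‖ * (‖w‖ + ‖w'‖) * ‖w - w'‖ := by
  have h : ⟪v, w⟫ • w - ⟪v, w'⟫ • w' = ⟪v, w - w'⟫ • w + ⟪v, w'⟫ • (w - w') := by
    simp only [inner_sub_right]; module
  rw [h]
  refine (norm_add_le _ _).trans ?_
  rw [norm_smul, norm_smul, Real.norm_eq_abs, Real.norm_eq_abs]
  have h₁ := abs_real_inner_le_norm v (w - w')
  have h₂ := abs_real_inner_le_norm v w'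
  have := norm_nonneg v
  have := norm_nonneg w
  have := norm_nonneg (w - w')
  nlinarith

lemma norm_sum_smul_inner_smul_sub_le {s : Finset F} {p q : F → ℝ} {y c c' : F} {r : ℝ}
    (hs : ∀ x ∈ s, ‖x‖ ≤ r) (hc : ‖c‖ ≤ r) (hc' : ‖c'‖ ≤ r) (hq : ∑ x ∈ s, |q x| = 1) :
    ‖∑ x ∈ s, p x • (⟪y - x, x - c⟫ • (x - c)) - ∑ x ∈ s, q x • (⟪y - x, x - c'⟫ • (x - c'))‖ ≤
      4 * r * (‖y‖ + r) * (r * ∑ x ∈ s, |p x - q x| + ‖c - c'‖) := by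
  refine (norm_sum_smul_sub_sum_smul_le s p q _ _).trans ?_
  have hr : 0 ≤ r := (norm_nonneg c).trans hc
  have hyx : ∀ x ∈ s, ‖y - x‖ ≤ ‖y‖ + r := fun x hx =>
    (norm_sub_le y x).trans (by gcongr; exact hs x hx)
  have hxc : ∀ x ∈ s, ∀ c : F, ‖c‖ ≤ r → ‖x - c‖ ≤ 2 * r := fun x hx c hc =>
    (norm_sub_le x c).trans (by linarith [hs x hx])
  have hT : ∀ x ∈ s, ‖⟪y - x, x - c⟫ • (x - c)‖ ≤ (‖y‖ + r) * (2 * r) * (2 * r) := by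
    intro x hx
    refine (norm_inner_smul_le _ _).trans ?_
    have := hxc x hx c hc
    gcongr
    exact hyx x hx
  have hdT : ∀ x ∈ s, ‖⟪y - x, x - c⟫ • (x - c) - ⟪y - x, x - c'⟫ • (x - c')‖ ≤
      (‖y‖ + r) * (4 * r) * ‖c - c'‖ := by
    intro x hx
    refine (norm_inner_smul_sub_inner_smul_le _ _ _).trans ?_
    rw [sub_sub_sub_cancel_left, norm_sub_rev c' c]
    have := hxc x hx c hc
    have := hxc x hx c' hc'
    gcongr
    · exact hyx x hx
    · linarith
  calc _ ≤ ∑ x ∈ s, (|p x - q x| * ((‖y‖ + r) * (2 * r) * (2 * r)) +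
        |q x| * ((‖y‖ + r) * (4 * r) * ‖c - c'‖)) := by
        gcongr with x hx
        · exact hT x hx
        · exact hdT x hx
    _ = _ := by rw [Finset.sum_add_distrib, ← Finset.sum_mul, ← Finset.sum_mul, hq]; ring

lemma sum_sub_inv_card_smul_sum {V : Type*} [AddCommGroup V] [Module ℝ V] (K : Finset V) :
    ∑ x ∈ K, (x - (K.card : ℝ)⁻¹ • ∑ x' ∈ K, x') = 0 := by
  rcases K.eq_empty_or_nonempty with rfl | hK
  · simp
  rw [Finset.sum_sub_distrib, Finset.sum_const, ← Nat.cast_smul_eq_nsmul ℝ, smul_smul,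
    mul_inv_cancel₀ (by exact_mod_cast hK.card_pos.ne'), one_smul, sub_self]

lemma sum_inner_smul_sub_eq_of_norm_eq {K : Finset F} {y c : F} {r d : ℝ}
    (hr : ∀ x ∈ K, ‖x‖ = r) (hd : ∀ x ∈ K, ‖y - x‖ = d) (hc : ∑ x ∈ K, (x - c) = 0) :
    ∑ x ∈ K, ⟪c, x - c⟫ • (x - c) = ∑ x ∈ K, ⟪y - x, x - c⟫ • (x - c) := by
  set κ := r ^ 2 - ‖c‖ ^ 2 - (‖y‖ ^ 2 + r ^ 2 - d ^ 2) / 2 + ⟪y, c⟫ with hκ_def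
  have hκ : ∀ x ∈ K, ⟪c, x - c⟫ = ⟪y - x, x - c⟫ + κ := by
    intro x hx
    have hyx := norm_sub_sq_real y x
    have hxx : ⟪x, x⟫ = r ^ 2 := by rw [real_inner_self_eq_norm_sq, hr x hx]
    have hcc : ⟪c, c⟫ = ‖c‖ ^ 2 := real_inner_self_eq_norm_sq c
    rw [hd x hx, hr x hx] at hyx
    simp only [inner_sub_left, inner_sub_right, real_inner_comm x c]
    linarith [hκ_def]
  rw [Finset.sum_congr rfl fun x hx => by rw [hκ x hx, add_smul], Finset.sum_add_distrib,
    ← Finset.smul_sum, hc, smul_zero, add_zero]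

end General

section ClosestPoints

variable {n : ℕ} {S : Finset (EuclideanSpace ℝ (Fin n))} {x y : EuclideanSpace ℝ (Fin n)}
  {β r : ℝ}

lemma Sstar_subset : Sstar S y ⊆ S := Finset.filter_subset _ _

lemma norm_sub_eq_distS_of_mem_Sstar (hx : x ∈ Sstar S y) : ‖y - x‖ = distS S y :=
  (Finset.mem_filter.mp hx).2

lemma Sstar_nonempty (hS : S.Nonempty) : (Sstar S y).Nonempty := by
  obtain ⟨x, hx, hmin⟩ :=
    (hS.to_set.image fun x => ‖y - x‖).csInf_mem (S.finite_toSet.image _)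
  exact ⟨x, Finset.mem_filter.mpr ⟨hx, hmin⟩⟩

lemma gap_add_le (hx : x ∈ S \ Sstar S y) :
    gap S y + distS S y ^ 2 / 2 ≤ ‖y - x‖ ^ 2 / 2 := by
  have := csInf_le (S.finite_toSet.sdiff.image fun x => ‖y - x‖ ^ 2 / 2).bddBelow
    ⟨x, by rw [← Finset.coe_sdiff]; exact hx, rfl⟩
  unfold gap
  linarith

lemma sum_abs_gibbsW_sub_uniformWeight_le (hS : S.Nonempty) (hβ : 0 ≤ β) :
    ∑ x ∈ S, |gibbsW S β x y - uniformWeight (Sstar S y) x| ≤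
      2 * (S \ Sstar S y).card * Real.exp (-β * gap S y) :=
  sum_abs_div_sum_sub_uniformWeight_le (W := fun x => Real.exp (-β * ‖y - x‖ ^ 2 / 2))
    (e₀ := Real.exp (-β * distS S y ^ 2 / 2)) (ε := Real.exp (-β * gap S y))
    Sstar_subset (Sstar_nonempty hS) (Real.exp_pos _) (Real.exp_pos _).le
    (fun _ _ => (Real.exp_pos _).le)
    (fun x hx => by simp only [norm_sub_eq_distS_of_mem_Sstar hx])
    (fun x hx => by
      rw [← Real.exp_add, Real.exp_le_exp]
      nlinarith [gap_add_le hx])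

lemma sum_abs_gibbsW (hS : S.Nonempty) : ∑ x ∈ S, |gibbsW S β x y| = 1 := by
  have hD : 0 < ∑ x' ∈ S, Real.exp (-β * ‖y - x'‖ ^ 2 / 2) :=
    Finset.sum_pos (fun _ _ => Real.exp_pos _) hS
  unfold gibbsW
  rw [Finset.sum_congr rfl fun x _ => abs_of_nonneg (div_nonneg (Real.exp_pos _).le hD.le)]
  exact (Finset.sum_div _ _ _).symm.trans (div_self hD.ne')

lemma norm_gibbsBary_le (hS : S.Nonempty) (hr : ∀ x ∈ S, ‖x‖ ≤ r) :
    ‖gibbsBary S β y‖ ≤ r := by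
  simpa [gibbsBary, sum_abs_gibbsW hS] using norm_sum_smul_le_of_norm_le S (gibbsW S β · y) hr

lemma baryStar_eq_sum_uniformWeight_smul :
    baryStar S y = ∑ x ∈ S, uniformWeight (Sstar S y) x • x :=
  (sum_uniformWeight_smul Sstar_subset id).symm

lemma norm_baryStar_le (hS : S.Nonempty) (hr : ∀ x ∈ S, ‖x‖ ≤ r) : ‖baryStar S y‖ ≤ r := by
  rw [baryStar_eq_sum_uniformWeight_smul]
  simpa [sum_abs_uniformWeight Sstar_subset (Sstar_nonempty hS)] using
    norm_sum_smul_le_of_norm_le S (uniformWeight (Sstar S y)) hr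

lemma norm_gibbsBary_sub_baryStar_le (hr : ∀ x ∈ S, ‖x‖ ≤ r) :
    ‖gibbsBary S β y - baryStar S y‖ ≤
      r * ∑ x ∈ S, |gibbsW S β x y - uniformWeight (Sstar S y) x| := by
  rw [gibbsBary, baryStar_eq_sum_uniformWeight_smul, ← Finset.sum_sub_distrib, mul_comm]
  simp only [← sub_smul]
  exact norm_sum_smul_le_of_norm_le S _ hr

lemma forceF_eq_smul_sum : forceF S β y =
    β • ∑ x ∈ S, gibbsW S β x y • (⟪y - x, x - gibbsBary S β y⟫ • (x - gibbsBary S β y)) := by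
  simp only [forceF, xtil, mul_smul]

lemma Astar_eq_sum_uniformWeight_smul (hr : ∀ x ∈ S, ‖x‖ = r) :
    Astar S y = ∑ x ∈ S, uniformWeight (Sstar S y) x •
      (⟪y - x, x - baryStar S y⟫ • (x - baryStar S y)) := by
  have hc : ∑ x ∈ Sstar S y, (x - baryStar S y) = 0 := sum_sub_inv_card_smul_sum _
  rw [sum_uniformWeight_smul Sstar_subset, Astar,
    sum_inner_smul_sub_eq_of_norm_eq (fun x hx => hr x (Sstar_subset hx))
      (fun _ hx => norm_sub_eq_distS_of_mem_Sstar hx) hc]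

end ClosestPoints

/-- Lemma 6.7(b) / eq. (65) of the paper. For a finite set `S ⊂ ℝ^n` of
points of common norm `r > 0` with at least two elements, there is a constant `C > 0`,
depending only on the cardinality of `S` and on `r`, such that for every `β > 0` and every
`y` with `S_*(y) ≠ S`, one has `‖F(y) − β A_*(y)‖ ≤ C β (‖y‖ + r) exp(−β c(y))`. -/
theorem statement5 (N : ℕ) (hN : 2 ≤ N) (r : ℝ) (hr : 0 < r) :
    ∃ C > (0 : ℝ), ∀ (n : ℕ) (S : Finset (EuclideanSpace ℝ (Fin n))),
      S.card = N → (∀ x ∈ S, ‖x‖ = r) →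
        ∀ β : ℝ, 0 < β → ∀ y : EuclideanSpace ℝ (Fin n), Sstar S y ≠ S →
          ‖forceF S β y - β • Astar S y‖
            ≤ C * β * (‖y‖ + r) * Real.exp (-β * gap S y) := by
  have hN₀ : (0 : ℝ) < N := by exact_mod_cast (by omega : 0 < N)
  refine ⟨16 * N * r ^ 2, by positivity, fun n S hcard hnorm β hβ y _ => ?_⟩
  have hS : S.Nonempty := Finset.card_pos.mp (by omega)
  have hle : ∀ x ∈ S, ‖x‖ ≤ r := fun x hx => (hnorm x hx).le
  set δ := ∑ x ∈ S, |gibbsW S β x y - uniformWeight (Sstar S y) x|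
  have hδ : δ ≤ 2 * N * Real.exp (-β * gap S y) := by
    refine (sum_abs_gibbsW_sub_uniformWeight_le hS hβ.le).trans ?_
    gcongr
    exact_mod_cast hcard ▸ Finset.card_le_card Finset.sdiff_subset
  have hbary : ‖gibbsBary S β y - baryStar S y‖ ≤ r * δ := norm_gibbsBary_sub_baryStar_le hle
  have hperturb := norm_sum_smul_inner_smul_sub_le (y := y) (p := (gibbsW S β · y)) hle
    (norm_gibbsBary_le (β := β) (y := y) hS hle) (norm_baryStar_le (y := y) hS hle)
    (sum_abs_uniformWeight Sstar_subset (Sstar_nonempty (y := y) hS))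
  rw [forceF_eq_smul_sum, Astar_eq_sum_uniformWeight_smul hnorm, ← smul_sub, norm_smul,
    Real.norm_eq_abs, abs_of_pos hβ]
  calc β * ‖_‖ ≤ β * (4 * r * (‖y‖ + r) * (2 * (r * δ))) := by
        gcongr
        exact hperturb.trans (by gcongr; linarith)
    _ ≤ β * (4 * r * (‖y‖ + r) * (2 * (r * (2 * N * Real.exp (-β * gap S y))))) := by
        gcongr
    _ = 16 * N * r ^ 2 * β * (‖y‖ + r) * Real.exp (-β * gap S y) := by ring

end
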